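/- Let Ω be a symmetric nonnegative integer n×n matrix with zero diagonal and let Γ(Ω) be the monoid generated by Q_i = I + D_iΩ. Then no element M ∈ Γ(Ω) has a complex eigenvalue μ with |μ| = 1 other than μ = 1. -/

import Mathlib

/-!
Over `ℂ`, `Ω` is Hermitian, so `h(v) = v* Ω v` is a real quadratic form. Since `Ω i i = 0`,
`h(Q_i v) = h(v) + 2 |(Ω v)_i|²`, and `Q_i v = v + (Ω v)_i e_i`: each generator weakly raises `h`
and fixes exactly the vectors whose `h`-value it preserves. Both properties pass to products, so
they hold for every `M ∈ Γ(Ω)`. For an eigenvector `w` with `|μ| = 1`,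
`h(M w) = |μ|² h(w) = h(w)`, hence `M w = w` and `μ = 1`.
-/

open Matrix
open scoped ComplexOrder

namespace Matrix

variable {m R : Type*} [Fintype m] [DecidableEq m]

def weaklyIncreasingSubmonoid [Semiring R] {α : Type*} [PartialOrder α] (q : (m → R) → α) :
    Submonoid (Matrix m m R) where
  carrier := {A | ∀ v, q v ≤ q (A *ᵥ v) ∧ (q (A *ᵥ v) = q v → A *ᵥ v = v)}
  one_mem' v := by simp
  mul_mem' {A B} hA hB v := by
    obtain ⟨hBle, hBfix⟩ := hB v
    obtain ⟨hAle, hAfix⟩ := hA (B *ᵥ v)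
    rw [← mulVec_mulVec]
    refine ⟨hBle.trans hAle, fun heq => ?_⟩
    have hBv : B *ᵥ v = v := hBfix (le_antisymm (heq ▸ hAle) hBle)
    rw [hBv] at hAfix heq ⊢
    exact hAfix heq

lemma one_add_single_mul_mulVec [Semiring R] (Ω : Matrix m m R) (i : m) (v : m → R) :
    (1 + single i i 1 * Ω) *ᵥ v = v + Pi.single i ((Ω *ᵥ v) i) := by
  ext k
  rw [add_mulVec, one_mulVec, ← mulVec_mulVec, single_mulVec, one_mul, Pi.single]

lemma hermitianForm_one_add_single_mul_mulVec [CommRing R] [StarRing R] {Ω : Matrix m m R}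
    (hΩ : Ω.IsHermitian) {i : m} (hdiag : Ω i i = 0) (v : m → R) :
    star ((1 + single i i 1 * Ω) *ᵥ v) ⬝ᵥ (Ω *ᵥ ((1 + single i i 1 * Ω) *ᵥ v)) =
      star v ⬝ᵥ (Ω *ᵥ v) + 2 * (star ((Ω *ᵥ v) i) * (Ω *ᵥ v) i) := by
  set c := (Ω *ᵥ v) i
  have hcross : star v ⬝ᵥ (Ω *ᵥ Pi.single i c) = star c * c := by
    rw [dotProduct_mulVec, ← hΩ.eq, ← star_mulVec, dotProduct_single]
    rfl
  rw [one_add_single_mul_mulVec, star_add, mulVec_add, dotProduct_add, add_dotProduct,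
    add_dotProduct, hcross, Pi.star_single, single_dotProduct, single_dotProduct, mulVec_single]
  simp only [Pi.smul_apply, col_apply, hdiag, smul_zero, mul_zero, add_zero]
  ring

variable {𝕜 : Type*} [RCLike 𝕜]

lemma one_add_single_mul_mem_weaklyIncreasingSubmonoid {Ω : Matrix m m 𝕜} (hΩ : Ω.IsHermitian)
    {i : m} (hdiag : Ω i i = 0) :
    1 + single i i 1 * Ω ∈ weaklyIncreasingSubmonoid fun v => star v ⬝ᵥ (Ω *ᵥ v) := by
  intro v
  dsimp only
  rw [hermitianForm_one_add_single_mul_mulVec hΩ hdiag, one_add_single_mul_mulVec]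
  have hnonneg : 0 ≤ star ((Ω *ᵥ v) i) * (Ω *ᵥ v) i := star_mul_self_nonneg _
  refine ⟨le_add_of_nonneg_right (mul_nonneg zero_le_two hnonneg), fun heq => ?_⟩
  have : (Ω *ᵥ v) i = 0 := by simpa using heq
  simp [this]

lemma ofRealHom_mapMatrix_one_add_single_mul_intCast (Ω : Matrix m m ℤ) (i : m) :
    Complex.ofRealHom.mapMatrix (1 + single i i 1 * Ω.map (Int.cast : ℤ → ℝ)) =
      1 + single i i 1 * Ω.map (Int.cast : ℤ → ℂ) := by
  rw [map_add, map_one, map_mul, RingHom.mapMatrix_apply, RingHom.mapMatrix_apply, map_single,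
    Matrix.map_map]
  simp [Function.comp_def]

end Matrix

theorem stmt6_general {n : ℕ} (Ω : Matrix (Fin n) (Fin n) ℤ) (hsymm : Ωᵀ = Ω)
    (hdiag : ∀ i, Ω i i = 0)
    (M : Matrix (Fin n) (Fin n) ℝ)
    (hM : M ∈ Submonoid.closure
      (Set.range fun i : Fin n =>
        (1 : Matrix (Fin n) (Fin n) ℝ) + single i i 1 * (Ω.map Int.cast)))
    (μ : ℂ) (habs : ‖μ‖ = 1)
    (heig : ∃ w : Fin n → ℂ, w ≠ 0 ∧ (M.map Complex.ofReal) *ᵥ w = μ • w) :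
    μ = 1 := by
  obtain ⟨w, hw, hMw⟩ := heig
  have hΩc : (Ω.map (Int.cast : ℤ → ℂ)).IsHermitian := by
    ext i j
    simpa using congrArg (fun A : Matrix _ _ ℤ => (A j i : ℂ)) hsymm.symm
  have hMc : M ∈ (weaklyIncreasingSubmonoid fun v => star v ⬝ᵥ (Ω.map (Int.cast : ℤ → ℂ) *ᵥ v)).comap
      Complex.ofRealHom.mapMatrix.toMonoidHom := by
    refine Submonoid.closure_le.2 ?_ hM
    rintro _ ⟨i, rfl⟩
    rw [SetLike.mem_coe, Submonoid.mem_comap, RingHom.toMonoidHom_eq_coe, MonoidHom.coe_coe,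
      ofRealHom_mapMatrix_one_add_single_mul_intCast]
    exact one_add_single_mul_mem_weaklyIncreasingSubmonoid hΩc (by simp [hdiag])
  have hμ : star μ * μ = 1 := by
    rw [RCLike.star_def, RCLike.conj_mul, habs]; simp
  have hfix : M.map Complex.ofReal *ᵥ w = w := by
    refine (hMc w).2 ?_
    change star (M.map Complex.ofReal *ᵥ w) ⬝ᵥ (Ω.map Int.cast *ᵥ (M.map Complex.ofReal *ᵥ w)) =
      star w ⬝ᵥ (Ω.map Int.cast *ᵥ w)
    rw [hMw, star_smul, mulVec_smul, smul_dotProduct, dotProduct_smul, smul_smul,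
      smul_eq_mul, hμ, one_mul]
  exact smul_left_injective ℂ hw (hMw.symm.trans hfix |>.trans (one_smul ℂ w).symm)

theorem stmt6 {n : ℕ} (Ω : Matrix (Fin n) (Fin n) ℤ) (hsymm : Ωᵀ = Ω)
    (hnn : ∀ i j, 0 ≤ Ω i j) (hdiag : ∀ i, Ω i i = 0)
    (M : Matrix (Fin n) (Fin n) ℝ)
    (hM : M ∈ Submonoid.closure
      (Set.range fun i : Fin n =>
        (1 : Matrix (Fin n) (Fin n) ℝ) + single i i 1 * (Ω.map Int.cast)))
    (μ : ℂ) (habs : ‖μ‖ = 1)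
    (heig : ∃ w : Fin n → ℂ, w ≠ 0 ∧ (M.map Complex.ofReal) *ᵥ w = μ • w) :
    μ = 1 :=
  stmt6_general Ω hsymm hdiag M hM μ habs heig
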